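/- arXiv:1602.08515 — 4 statements merged into one kernel-verified Lean document; each statement's English description precedes it below -/
import Mathlib

section
/- A feasible flow x in a directed graph with node supplies b and arc capacities U is an extreme point of the flow polyhedron P_F if and only if x is a cycle free solution, i.e., the set of free arcs (arcs a with 0 < x_a < U_a) contains no undirected cycle. -/
open scoped BigOperators

/-- Flow conservation: at each vertex, outflow minus inflow equals the supply. -/
def conserves {V A : Type*} [Fintype A] [DecidableEq V] (tail head : A → V)
    (b : V → ℝ) (x : A → ℝ) : Prop :=
  ∀ v : V,
    ((∑ a : A, if tail a = v then x a else 0) - ∑ a : A, if head a = v then x a else 0) = b v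

/-- The flow polyhedron: flows satisfying conservation, nonnegativity, and the capacity
bounds (`U a = none` means infinite capacity). -/
def flowPoly {V A : Type*} [Fintype A] [DecidableEq V] (tail head : A → V)
    (b : V → ℝ) (U : A → Option ℝ) : Set (A → ℝ) :=
  {x | conserves tail head b x ∧ ∀ a : A, 0 ≤ x a ∧ ∀ c ∈ U a, x a ≤ c}

/-- An arc is free for `x` if `0 < x a < U a`. -/
def IsFreeArc {A : Type*} (U : A → Option ℝ) (x : A → ℝ) (a : A) : Prop :=
  0 < x a ∧ ∀ c ∈ U a, x a < c

/-- The arc set `S` contains an undirected cycle: a closed walk of length at least one using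
pairwise distinct arcs of `S` (in either orientation) through pairwise distinct vertices. -/
def HasUndirCycle {V A : Type*} (tail head : A → V) (S : Set A) : Prop :=
  ∃ (k : ℕ) (arcs : Fin k → A) (vs : Fin (k + 1) → V),
    1 ≤ k ∧ Function.Injective arcs ∧
    Function.Injective (fun i : Fin k => vs i.castSucc) ∧
    vs (Fin.last k) = vs 0 ∧
    ∀ i : Fin k, arcs i ∈ S ∧
      ((tail (arcs i) = vs i.castSucc ∧ head (arcs i) = vs i.succ) ∨
        (head (arcs i) = vs i.castSucc ∧ tail (arcs i) = vs i.succ))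

/-!
A circulation `d` (zero net outflow at every vertex) supported on the free arcs of `x` can be
added to `x` in both directions: `x ± t • d ∈ P_F` for small `t > 0`. Conversely, on a restricted
arc `x a` is an endpoint of the feasible interval, so any open segment of `P_F` through `x` is
constant there, and the difference of its endpoints is a circulation supported on the free arcs.
Hence `x` is extreme iff the only circulation supported on its free arcs is zero.

The signed indicator of an undirected cycle is a circulation. Conversely, in the support of a
nonzero circulation an arc that is not a loop cannot be the only support arc at either of its
endpoints, so a non-backtracking walk inside the support exists; its first repeated vertex
closes a cycle.
-/

open Filter Topology

lemma Fin.sum_castSucc_sub_succ {M : Type*} [AddCommGroup M] {k : ℕ} (f : Fin (k + 1) → M) :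
    ∑ i : Fin k, (f i.castSucc - f i.succ) = f 0 - f (Fin.last k) := by
  induction k with
  | zero => simp
  | succ k ih =>
    rw [Fin.sum_univ_castSucc]
    simp_rw [Fin.succ_castSucc]
    rw [ih (fun i => f i.castSucc)]
    simp

lemma eq_of_mem_openSegment_of_le_min_or_max_le {𝕜 : Type*} [Field 𝕜] [LinearOrder 𝕜]
    [IsStrictOrderedRing 𝕜] {p q r : 𝕜} (h : p ∈ openSegment 𝕜 q r)
    (hp : p ≤ min q r ∨ max q r ≤ p) : q = r := by
  by_contra hqr
  rw [openSegment_eq_Ioo' hqr] at h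
  rcases hp with hp | hp
  exacts [(h.1.trans_le hp).false, (h.2.trans_le hp).false]

section FlowNetworks

variable {V A : Type*}

section NetOutflow

variable [Fintype A] [DecidableEq V] (tail head : A → V)

noncomputable def netOutflow : (A → ℝ) →ₗ[ℝ] V → ℝ :=
  Fintype.linearCombination ℝ fun a => Pi.single (tail a) 1 - Pi.single (head a) 1

lemma netOutflow_single [DecidableEq A] (a : A) (r : ℝ) :
    netOutflow tail head (Pi.single a r) = r • (Pi.single (tail a) 1 - Pi.single (head a) 1) :=
  Fintype.linearCombination_apply_single ℝ _ a r

lemma netOutflow_apply (d : A → ℝ) (v : V) :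
    netOutflow tail head d v =
      (∑ a, if tail a = v then d a else 0) - ∑ a, if head a = v then d a else 0 := by
  simp [netOutflow, Fintype.linearCombination_apply, Finset.sum_apply, Pi.single_apply, eq_comm,
    mul_sub, Finset.sum_sub_distrib]

lemma conserves_iff_netOutflow_eq {b : V → ℝ} {x : A → ℝ} :
    conserves tail head b x ↔ netOutflow tail head x = b := by
  simp [conserves, funext_iff, netOutflow_apply]

end NetOutflow

section Cycles

variable {tail head : A → V} {S : Set A}

def Joins (tail head : A → V) (a : A) (u v : V) : Prop :=
  (tail a = u ∧ head a = v) ∨ (head a = u ∧ tail a = v)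

lemma Joins.eq_or_eq {a : A} {u v u' v' : V} (h : Joins tail head a u v)
    (h' : Joins tail head a u' v') : u = u' ∨ v = u' := by
  unfold Joins at h h'
  grind

lemma Joins.incident_left {a : A} {u v : V} (h : Joins tail head a u v) :
    tail a = u ∨ head a = u :=
  h.imp And.left And.left

lemma Joins.incident_right {a : A} {u v : V} (h : Joins tail head a u v) :
    tail a = v ∨ head a = v :=
  (h.imp And.right And.right).symm

section
variable [DecidableEq V]

def otherEnd (tail head : A → V) (a : A) (u : V) : V := if tail a = u then head a else tail a

lemma joins_otherEnd {a : A} {u : V} (hu : tail a = u ∨ head a = u) :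
    Joins tail head a u (otherEnd tail head a u) := by
  unfold otherEnd
  split_ifs with h
  · exact .inl ⟨h, rfl⟩
  · exact .inr ⟨hu.resolve_left h, rfl⟩

lemma Joins.sign_smul {a : A} {u v : V} (h : Joins tail head a u v) :
    (if tail a = u then 1 else -1 : ℝ) • (Pi.single (tail a) 1 - Pi.single (head a) 1 : V → ℝ) =
      Pi.single u 1 - Pi.single v 1 := by
  rcases h with ⟨rfl, rfl⟩ | ⟨rfl, rfl⟩
  · simp
  · split_ifs with h
    · simp [h]
    · simp

end

lemma hasUndirCycle_mono {S' : Set A} (h : S ⊆ S') :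
    HasUndirCycle tail head S → HasUndirCycle tail head S' := by
  rintro ⟨k, arcs, vs, hk, harcs, hvs, hclose, hcyc⟩
  exact ⟨k, arcs, vs, hk, harcs, hvs, hclose, fun i => ⟨h (hcyc i).1, (hcyc i).2⟩⟩

lemma hasUndirCycle_of_loop {a : A} (ha : a ∈ S) (hloop : tail a = head a) :
    HasUndirCycle tail head S :=
  ⟨1, fun _ => a, fun _ => tail a, le_rfl, Function.injective_of_subsingleton _,
    Function.injective_of_subsingleton _, rfl, fun _ => ⟨ha, .inl ⟨rfl, hloop.symm⟩⟩⟩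

lemma hasUndirCycle_of_closedWalk {k : ℕ} (hk : 1 ≤ k) {t : ℕ → A} {w : ℕ → V}
    (hS : ∀ n < k, t n ∈ S) (hjoin : ∀ n < k, Joins tail head (t n) (w n) (w (n + 1)))
    (hnb : ∀ n, n + 1 < k → t (n + 1) ≠ t n) (hinj : Set.InjOn w (Set.Iio k))
    (hclose : w k = w 0) : HasUndirCycle tail head S := by
  -- `t p = t q` with `p < q` forces `w p = w q` or `w (p + 1) = w q`; the latter means backtracking
  -- if `q = p + 1` and a repeated vertex otherwise.
  have harcs : ∀ p q, p < q → q < k → t p ≠ t q := by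
    intro p q hpq hq heq
    rcases (hjoin p (hpq.trans hq)).eq_or_eq (heq ▸ hjoin q hq) with h | h
    · exact hpq.ne (hinj (hpq.trans hq) hq h)
    · rcases (Nat.succ_le_of_lt hpq).eq_or_lt with rfl | hlt
      · exact hnb p hq heq.symm
      · exact hlt.ne (hinj (hlt.trans hq) hq h)
  refine ⟨k, fun i => t i, fun i => w i, hk, fun i j hij => ?_, fun i j hij => ?_, hclose,
    fun i => ⟨hS i i.2, hjoin i i.2⟩⟩
  · by_contra hne
    rcases Fin.val_ne_of_ne hne |>.lt_or_gt with h | h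
    · exact harcs _ _ h j.2 hij
    · exact harcs _ _ h i.2 hij.symm
  · exact Fin.ext (hinj i.2 j.2 hij)

lemma hasUndirCycle_of_walk [Finite A] {t : ℕ → A} {w : ℕ → V} (hS : ∀ n, t n ∈ S)
    (hjoin : ∀ n, Joins tail head (t n) (w n) (w (n + 1))) (hnb : ∀ n, t (n + 1) ≠ t n) :
    HasUndirCycle tail head S := by
  classical
  have hw (n : ℕ) : w n ∈ Set.range tail ∪ Set.range head :=
    (hjoin n).incident_left.imp (⟨_, ·⟩) (⟨_, ·⟩)
  have hrep : ∃ j, ∃ i < j, w i = w j := by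
    obtain ⟨i, j, hij, h⟩ :=
      Set.Finite.exists_lt_map_eq_of_forall_mem hw ((Set.finite_range _).union (Set.finite_range _))
    exact ⟨j, i, hij, h⟩
  obtain ⟨i, hij, hrepeat⟩ := Nat.find_spec hrep
  set j := Nat.find hrep
  refine hasUndirCycle_of_closedWalk (k := j - i) (t := fun n => t (i + n))
    (w := fun n => w (i + n)) (by omega) (fun n _ => hS _) (fun n _ => hjoin (i + n))
    (fun n _ => hnb (i + n)) ?_ (by simp [Nat.add_sub_cancel' hij.le, hrepeat])
  intro p hp q hq hpq
  by_contra hne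
  rcases Nat.lt_or_gt_of_ne hne with h | h
  · exact Nat.find_min hrep (m := i + q) (by simp at hq; omega) ⟨i + p, by omega, hpq⟩
  · exact Nat.find_min hrep (m := i + p) (by simp at hp; omega) ⟨i + q, by omega, hpq.symm⟩

lemma hasUndirCycle_of_forall_exists_ne [Finite A] [DecidableEq V] (hne : S.Nonempty)
    (hdeg : ∀ a ∈ S, ∀ v, tail a = v ∨ head a = v →
      ∃ a' ∈ S, a' ≠ a ∧ (tail a' = v ∨ head a' = v)) :
    HasUndirCycle tail head S := by
  obtain ⟨a₀, ha₀⟩ := hne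
  choose! next hnextS hnext_ne hnext_inc using hdeg
  let step (p : A × V) : A × V :=
    (next p.1 (otherEnd tail head p.1 p.2), otherEnd tail head p.1 p.2)
  let walk (n : ℕ) : A × V := step^[n] (a₀, tail a₀)
  have hwalk_succ (n : ℕ) : walk (n + 1) = step (walk n) := Function.iterate_succ_apply' ..
  have hinv (n : ℕ) :
      (walk n).1 ∈ S ∧ (tail (walk n).1 = (walk n).2 ∨ head (walk n).1 = (walk n).2) := by
    induction n with
    | zero => exact ⟨ha₀, .inl rfl⟩
    | succ n ih =>
      rw [hwalk_succ]
      have hend := (joins_otherEnd ih.2).incident_right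
      exact ⟨hnextS _ ih.1 _ hend, hnext_inc _ ih.1 _ hend⟩
  refine hasUndirCycle_of_walk (t := fun n => (walk n).1) (w := fun n => (walk n).2)
    (fun n => (hinv n).1) (fun n => ?_) (fun n => ?_) <;> rw [hwalk_succ]
  · exact joins_otherEnd (hinv n).2
  · exact hnext_ne _ (hinv n).1 _ (joins_otherEnd (hinv n).2).incident_right

end Cycles

section Circulations

variable [Fintype A] [DecidableEq V] {tail head : A → V}

lemma exists_ne_incident_of_netOutflow_eq_zero {d : A → ℝ} (hd : netOutflow tail head d = 0)
    {a : A} (ha : d a ≠ 0) (hloop : tail a ≠ head a) {v : V} (hv : tail a = v ∨ head a = v) :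
    ∃ a', d a' ≠ 0 ∧ a' ≠ a ∧ (tail a' = v ∨ head a' = v) := by
  -- Otherwise `a` alone contributes `± d a ≠ 0` to the net outflow at `v`.
  by_contra! hno
  let c (a' : A) : ℝ :=
    d a' * ((Pi.single (tail a') 1 : V → ℝ) v - (Pi.single (head a') 1 : V → ℝ) v)
  have hsum : ∑ a', c a' = 0 := by
    simpa [netOutflow, Fintype.linearCombination_apply, Finset.sum_apply] using congrFun hd v
  have hca : c a = 0 := by
    rw [← hsum, Finset.sum_eq_single a (fun a' _ ha' => ?_) (by simp)]
    by_cases hda' : d a' = 0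
    · simp [c, hda']
    · have := hno a' hda' ha'
      simp [c, Pi.single_apply, Ne.symm this.1, Ne.symm this.2]
  rcases hv with rfl | rfl
  · simp [c, ha, Pi.single_apply, hloop] at hca
  · simp [c, ha, Pi.single_apply, Ne.symm hloop] at hca

lemma hasUndirCycle_support_of_netOutflow_eq_zero {d : A → ℝ} (hd : netOutflow tail head d = 0)
    (hne : d ≠ 0) : HasUndirCycle tail head {a | d a ≠ 0} := by
  by_cases hloop : ∃ a, d a ≠ 0 ∧ tail a = head a
  · obtain ⟨a, ha, hloop⟩ := hloop
    exact hasUndirCycle_of_loop ha hloop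
  refine hasUndirCycle_of_forall_exists_ne (Function.ne_iff.1 hne) fun a ha v hv => ?_
  exact exists_ne_incident_of_netOutflow_eq_zero hd ha (fun h => hloop ⟨a, ha, h⟩) hv

lemma exists_circulation_of_hasUndirCycle {S : Set A} (h : HasUndirCycle tail head S) :
    ∃ d : A → ℝ, netOutflow tail head d = 0 ∧ (∀ a, d a ≠ 0 → a ∈ S) ∧ d ≠ 0 := by
  classical
  obtain ⟨k, arcs, vs, hk, harcs, -, hclose, hcyc⟩ := h
  let s (i : Fin k) : ℝ := if tail (arcs i) = vs i.castSucc then 1 else -1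
  have hs (i : Fin k) : s i ≠ 0 := by unfold s; split_ifs <;> norm_num
  let d : A → ℝ := ∑ i, Pi.single (arcs i) (s i)
  have hd_apply (a : A) : d a = ∑ i, if a = arcs i then s i else 0 := by
    simp [d, Finset.sum_apply, Pi.single_apply]
  refine ⟨d, ?_, fun a ha => ?_, fun hd => ?_⟩
  · have hterm (i : Fin k) : netOutflow tail head (Pi.single (arcs i) (s i)) =
        Pi.single (vs i.castSucc) 1 - Pi.single (vs i.succ) 1 := by
      rw [netOutflow_single]
      exact Joins.sign_smul (hcyc i).2
    simp only [d, map_sum, hterm]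
    rw [Fin.sum_castSucc_sub_succ (fun j => Pi.single (vs j) 1), hclose, sub_self]
  · obtain ⟨i, -, hi⟩ := Finset.exists_ne_zero_of_sum_ne_zero (hd_apply a ▸ ha)
    rw [show a = arcs i by by_contra h; exact hi (if_neg h)]
    exact (hcyc i).1
  · have := congrFun hd (arcs ⟨0, hk⟩)
    simp [hd_apply, harcs.eq_iff, hs] at this

theorem hasUndirCycle_iff_exists_circulation {S : Set A} :
    HasUndirCycle tail head S ↔
      ∃ d : A → ℝ, netOutflow tail head d = 0 ∧ (∀ a, d a ≠ 0 → a ∈ S) ∧ d ≠ 0 :=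
  ⟨exists_circulation_of_hasUndirCycle, fun ⟨_, hd, hS, hne⟩ =>
    hasUndirCycle_mono hS (hasUndirCycle_support_of_netOutflow_eq_zero hd hne)⟩

end Circulations

section FlowPolyhedron

variable [Fintype A] [DecidableEq V] {tail head : A → V} {b : V → ℝ} {U : A → Option ℝ}
  {x : A → ℝ}

lemma eq_of_mem_openSegment_of_not_isFreeArc {y z : A → ℝ} (hy : y ∈ flowPoly tail head b U)
    (hz : z ∈ flowPoly tail head b U) (hseg : x ∈ openSegment ℝ y z) {a : A}
    (ha : ¬ IsFreeArc U x a) : y a = z a := by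
  have hseg_a : x a ∈ openSegment ℝ (y a) (z a) := by
    obtain ⟨s, t, hs, ht, hst, rfl⟩ := hseg
    exact ⟨s, t, hs, ht, hst, rfl⟩
  refine eq_of_mem_openSegment_of_le_min_or_max_le hseg_a ?_
  simp only [IsFreeArc, not_and_or, not_lt, not_forall, exists_prop] at ha
  rcases ha with hx0 | ⟨c, hc, hcx⟩
  · exact .inl (le_min (hx0.trans (hy.2 a).1) (hx0.trans (hz.2 a).1))
  · exact .inr (max_le (((hy.2 a).2 c hc).trans hcx) (((hz.2 a).2 c hc).trans hcx))

lemma eventually_add_smul_mem_flowPoly (hx : x ∈ flowPoly tail head b U) {d : A → ℝ}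
    (hd : netOutflow tail head d = 0) (hfree : ∀ a, d a ≠ 0 → IsFreeArc U x a) :
    ∀ᶠ t in 𝓝 (0 : ℝ), x + t • d ∈ flowPoly tail head b U := by
  have hcons (t : ℝ) : conserves tail head b (x + t • d) := by
    have hxb := (conserves_iff_netOutflow_eq tail head).1 hx.1
    rw [conserves_iff_netOutflow_eq, map_add, map_smul, hxb, hd, smul_zero, add_zero]
  have hbounds (a : A) :
      ∀ᶠ t in 𝓝 (0 : ℝ), 0 ≤ (x + t • d) a ∧ ∀ c ∈ U a, (x + t • d) a ≤ c := by
    by_cases hda : d a = 0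
    · exact Eventually.of_forall fun t => by simpa [hda] using hx.2 a
    obtain ⟨hpos, hcap⟩ := hfree a hda
    have hlim : Tendsto (fun t : ℝ => x a + t * d a) (𝓝 0) (𝓝 (x a)) := by
      simpa using ((tendsto_id (x := 𝓝 (0 : ℝ))).mul_const (d a)).const_add (x a)
    have hcap' : ∀ᶠ t in 𝓝 (0 : ℝ), ∀ c ∈ U a, x a + t * d a < c := by
      cases hU : U a with
      | none => simp
      | some c => simpa using hlim.eventually (eventually_lt_nhds (hcap c hU))
    filter_upwards [hlim.eventually (eventually_gt_nhds hpos), hcap'] with t ht hct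
    exact ⟨ht.le, fun c hc => (hct c hc).le⟩
  filter_upwards [eventually_all.2 hbounds] with t ht using ⟨hcons t, ht⟩

theorem mem_extremePoints_flowPoly_iff (hx : x ∈ flowPoly tail head b U) :
    x ∈ (flowPoly tail head b U).extremePoints ℝ ↔
      ∀ d : A → ℝ, netOutflow tail head d = 0 → (∀ a, d a ≠ 0 → IsFreeArc U x a) → d = 0 := by
  refine ⟨fun hext d hd hfree => ?_, fun h => ⟨hx, fun y hy z hz hseg => ?_⟩⟩
  · have hev := eventually_add_smul_mem_flowPoly hx hd hfree
    have hneg : Tendsto Neg.neg (𝓝 (0 : ℝ)) (𝓝 0) := by simpa using tendsto_neg (0 : ℝ)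
    have hev' : ∀ᶠ t in 𝓝[>] (0 : ℝ), x + t • d ∈ flowPoly tail head b U ∧
        x + (-t) • d ∈ flowPoly tail head b U :=
      nhdsWithin_le_nhds (hev.and (hneg.eventually hev))
    obtain ⟨t, ⟨hplus, hminus⟩, ht⟩ := (hev'.and self_mem_nhdsWithin).exists
    have hmid : x ∈ openSegment ℝ (x + t • d) (x + (-t) • d) :=
      ⟨1 / 2, 1 / 2, by norm_num, by norm_num, by norm_num, by ext; simp; ring⟩
    have hxt : x + t • d = x := hext.2 hplus hminus hmid
    exact (smul_eq_zero.1 (add_eq_left.1 hxt)).resolve_left (ne_of_gt ht)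
  · have hyz : y = z := by
      have hy' := (conserves_iff_netOutflow_eq tail head).1 hy.1
      have hz' := (conserves_iff_netOutflow_eq tail head).1 hz.1
      refine sub_eq_zero.1 (h (y - z) (by rw [map_sub, hy', hz', sub_self]) fun a ha => ?_)
      by_contra hfree
      exact ha (sub_eq_zero.2 (eq_of_mem_openSegment_of_not_isFreeArc hy hz hseg hfree))
    subst hyz
    rw [openSegment_same] at hseg
    exact hseg.symm

end FlowPolyhedron

end FlowNetworks

theorem extremePoint_iff_cycleFree_general {V A : Type*} [Fintype A] [DecidableEq V]
    (tail head : A → V) (b : V → ℝ)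
    (U : A → Option ℝ)
    (x : A → ℝ) (hx : x ∈ flowPoly tail head b U) :
    x ∈ (flowPoly tail head b U).extremePoints ℝ ↔
      ¬ HasUndirCycle tail head {a | IsFreeArc U x a} := by
  rw [mem_extremePoints_flowPoly_iff hx, hasUndirCycle_iff_exists_circulation]
  simp only [Set.mem_ofPred_eq, not_exists, not_and, not_not]

/-- A feasible flow is an extreme point of the flow polyhedron iff it is a cycle free
solution, i.e. its free arcs contain no undirected cycle. -/
theorem extremePoint_iff_cycleFree {V A : Type*} [Fintype V] [Fintype A] [DecidableEq V]
    (tail head : A → V) (b : V → ℝ) (hb : ∑ v : V, b v = 0)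
    (U : A → Option ℝ) (hU : ∀ a, ∀ c ∈ U a, 0 ≤ c)
    (x : A → ℝ) (hx : x ∈ flowPoly tail head b U) :
    x ∈ (flowPoly tail head b U).extremePoints ℝ ↔
      ¬ HasUndirCycle tail head {a | IsFreeArc U x a} :=
  extremePoint_iff_cycleFree_general tail head b U x hx
end

section
/- Let f be a feasible flow in a directed graph with a spanning tree T, and let a = (u, v) be an arc of T. Removing a from T yields two components T_1 (containing u) and T_2 (containing v). Then f_a = Σ_{w ∈ T_1} b_w + Σ_{e ∈ A_2} f_e − Σ_{e ∈ A_1} f_e, where A_1 is the set of non-tree arcs with tail in T_1 and head in T_2, and A_2 is the set of non-tree arcs with tail in T_2 and head in T_1. -/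
/-!
Let `C` be the set of vertices reachable from `tail a₀` in `T \ {a₀}`. Summing the conservation
equations over `C` expresses `∑_{w ∈ C} b w` as the net flow out of `C`. Since `C` is closed
under steps along `T \ {a₀}`, every tree arc other than `a₀` has both ends in `C` or both
outside; and `head a₀ ∉ C`, because a path in `T \ {a₀}` from `tail a₀` to `head a₀` would close
a cycle with `a₀`. So the net outflow is `f a₀` plus the flow on the non-tree arcs leaving `C`
minus the flow on those entering it.
-/

open scoped BigOperators

def undirStep {V A : Type*} (tail head : A → V) (S : Set A) (v w : V) : Prop :=
  ∃ a ∈ S, (tail a = v ∧ head a = w) ∨ (tail a = w ∧ head a = v)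

def IsSpanningTree {V A : Type*} (tail head : A → V) (T : Set A) : Prop :=
  (∀ v w : V, Relation.ReflTransGen (undirStep tail head T) v w) ∧
    ¬ HasUndirCycle tail head T

section
variable {V A : Type*} (tail head : A → V)

/-- The orientation convention is that of `HasUndirCycle`, so a closed walk with injective
vertices and arcs is literally an undirected cycle. -/
def IsUndirWalk (S : Set A) {n : ℕ} (arcs : Fin n → A) (vs : Fin (n + 1) → V) : Prop :=
  ∀ i : Fin n, arcs i ∈ S ∧
    ((tail (arcs i) = vs i.castSucc ∧ head (arcs i) = vs i.succ) ∨
      (head (arcs i) = vs i.castSucc ∧ tail (arcs i) = vs i.succ))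

variable {tail head}

theorem IsUndirWalk.injective_arcs {S : Set A} {n : ℕ} {arcs : Fin n → A}
    {vs : Fin (n + 1) → V} (hw : IsUndirWalk tail head S arcs vs)
    (hvs : Function.Injective vs) : Function.Injective arcs := by
  intro i j hij
  have hv : ∀ {x y : Fin (n + 1)}, vs x = vs y → (x : ℕ) = y := fun h => congrArg Fin.val (hvs h)
  apply Fin.ext
  rcases (hw i).2 with ⟨hti, hhi⟩ | ⟨hhi, hti⟩ <;>
    rcases (hw j).2 with ⟨htj, hhj⟩ | ⟨hhj, htj⟩ <;> rw [hij] at hti hhi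
  all_goals
    have h₁ := hv (hti.symm.trans htj)
    have h₂ := hv (hhi.symm.trans hhj)
    simp only [Fin.val_castSucc, Fin.val_succ] at h₁ h₂
    omega

theorem undirStep_symm (S : Set A) : Std.Symm (undirStep tail head S) :=
  ⟨fun _ _ ⟨a, ha, h⟩ => ⟨a, ha, h.symm⟩⟩

theorem exists_injective_undirWalk_of_reflTransGen {S : Set A} {v w : V}
    (h : Relation.ReflTransGen (undirStep tail head S) v w) :
    ∃ (n : ℕ) (arcs : Fin n → A) (vs : Fin (n + 1) → V),
      IsUndirWalk tail head S arcs vs ∧ Function.Injective vs ∧ vs 0 = v ∧ vs (Fin.last n) = w := by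
  classical
  let G := SimpleGraph.fromEdgeSet (Sym2.fromRel (undirStep_symm (tail := tail) (head := head) S))
  obtain ⟨p⟩ : G.Reachable v w := by
    rwa [SimpleGraph.reachable_fromEdgeSet_fromRel_eq_reflTransGen]
  obtain ⟨q, hq⟩ := p.toPath
  have hstep : ∀ i : Fin q.length, undirStep tail head S (q.getVert i) (q.getVert (i + 1)) :=
    fun i => Sym2.fromRel_prop.mp ((SimpleGraph.fromEdgeSet_adj _).mp (q.adj_getVert_succ i.isLt)).1
  choose arcs harcs hjoin using hstep
  refine ⟨q.length, arcs, fun i => q.getVert i, fun i => ⟨harcs i, ?_⟩, ?_, by simp, by simp⟩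
  · simpa [and_comm] using hjoin i
  · intro i j hij
    exact Fin.ext (hq.getVert_injOn (Nat.lt_succ_iff.mp i.isLt) (Nat.lt_succ_iff.mp j.isLt) hij)

theorem hasUndirCycle_of_reflTransGen_diff {T : Set A} {a₀ : A} (ha₀ : a₀ ∈ T)
    (h : Relation.ReflTransGen (undirStep tail head (T \ {a₀})) (tail a₀) (head a₀)) :
    HasUndirCycle tail head T := by
  obtain ⟨n, arcs, vs, hw, hvs, h0, hlast⟩ := exists_injective_undirWalk_of_reflTransGen h
  refine ⟨n + 1, Fin.snoc arcs a₀, Fin.snoc vs (tail a₀), by omega,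
    Fin.snoc_injective_of_injective (hw.injective_arcs hvs) ?_, ?_, ?_, ?_⟩
  · rintro ⟨i, hi⟩
    exact (hw i).1.2 hi
  · simpa [Function.comp_def] using hvs
  · simp [h0]
  · intro i
    induction i using Fin.lastCases with
    | cast i =>
      rw [Fin.succ_castSucc]
      simp only [Fin.snoc_castSucc]
      exact And.imp_left (fun h => h.1) (hw i)
    | last => simp [hlast, ha₀]

theorem reflTransGen_undirStep_tail_iff_head {S : Set A} {a : A} (ha : a ∈ S) {v : V} :
    Relation.ReflTransGen (undirStep tail head S) v (tail a) ↔
      Relation.ReflTransGen (undirStep tail head S) v (head a) :=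
  ⟨fun h => h.tail ⟨a, ha, Or.inl ⟨rfl, rfl⟩⟩, fun h => h.tail ⟨a, ha, Or.inr ⟨rfl, rfl⟩⟩⟩

end

section
variable {V A : Type*} [Fintype A] {tail head : A → V}

theorem sum_indicator_sum_ite_eq [Fintype V] [DecidableEq V] {M : Type*} [AddCommMonoid M]
    (g : A → V) (f : A → M) (C : Set V) :
    ∑ w, C.indicator (fun w => ∑ a, if g a = w then f a else 0) w =
      ∑ a, (g ⁻¹' C).indicator f a := by
  have hpush : ∀ w, C.indicator (fun w => ∑ a, if g a = w then f a else 0) w =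
      ∑ a, C.indicator (fun w => if g a = w then f a else 0) w := fun w => by
    by_cases hw : w ∈ C <;> simp [hw]
  rw [Finset.sum_congr rfl fun w _ => hpush w, Finset.sum_comm]
  refine Finset.sum_congr rfl fun a _ => ?_
  rw [Finset.sum_eq_single (g a) (fun w _ hw => by simp [Ne.symm hw]) (by simp)]
  by_cases h : g a ∈ C <;> simp [h]

theorem conserves.sum_indicator_eq [Fintype V] [DecidableEq V] {b : V → ℝ} {f : A → ℝ}
    (hf : conserves tail head b f) (C : Set V) :
    ∑ w, C.indicator b w =
      ∑ a, (tail ⁻¹' C).indicator f a - ∑ a, (head ⁻¹' C).indicator f a := by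
  obtain rfl : b = fun v =>
      (∑ a, if tail a = v then f a else 0) - ∑ a, if head a = v then f a else 0 :=
    funext fun v => (hf v).symm
  simp only [Set.indicator_sub, Finset.sum_sub_distrib, sum_indicator_sum_ite_eq]

theorem sum_indicator_tail_sub_head_eq {C : Set V} {T : Set A} {a₀ : A} (f : A → ℝ)
    (ha₀ : a₀ ∈ T) (htail : tail a₀ ∈ C) (hhead : head a₀ ∉ C)
    (hT : ∀ a ∈ T \ {a₀}, (tail a ∈ C ↔ head a ∈ C)) :
    ∑ a, (tail ⁻¹' C).indicator f a - ∑ a, (head ⁻¹' C).indicator f a =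
      f a₀ + ∑ e, {e | e ∉ T ∧ tail e ∈ C ∧ head e ∉ C}.indicator f e -
        ∑ e, {e | e ∉ T ∧ tail e ∉ C ∧ head e ∈ C}.indicator f e := by
  classical
  have harc : ∀ a, (tail ⁻¹' C).indicator f a - (head ⁻¹' C).indicator f a =
      (if a = a₀ then f a else 0) + {e | e ∉ T ∧ tail e ∈ C ∧ head e ∉ C}.indicator f a -
        {e | e ∉ T ∧ tail e ∉ C ∧ head e ∈ C}.indicator f a := by
    intro a
    by_cases ha : a = a₀
    · subst ha
      simp [ha₀, htail, hhead]
    by_cases haT : a ∈ T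
    · have := hT a ⟨haT, ha⟩
      by_cases h : tail a ∈ C <;> simp_all
    · by_cases h₁ : tail a ∈ C <;> by_cases h₂ : head a ∈ C <;>
        simp [ha, haT, h₁, h₂]
  rw [← Finset.sum_sub_distrib, Finset.sum_congr rfl fun a _ => harc a, Finset.sum_sub_distrib,
    Finset.sum_add_distrib, Finset.sum_ite_eq' Finset.univ a₀ f, if_pos (Finset.mem_univ _)]

end

theorem tree_arc_flow_formula_general {V A : Type*} [Fintype V] [Fintype A] [DecidableEq V]
    (tail head : A → V) (b : V → ℝ)
    (f : A → ℝ) (hf : conserves tail head b f)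
    (T : Set A) (hT : IsSpanningTree tail head T) (a₀ : A) (ha₀ : a₀ ∈ T) :
    f a₀ =
      (∑ w : V,
          ({w | Relation.ReflTransGen (undirStep tail head (T \ {a₀})) (tail a₀) w} :
            Set V).indicator b w) +
        (∑ e : A,
          ({e | e ∉ T ∧
              tail e ∉ {w | Relation.ReflTransGen (undirStep tail head (T \ {a₀})) (tail a₀) w} ∧
              head e ∈ {w | Relation.ReflTransGen (undirStep tail head (T \ {a₀})) (tail a₀) w}} :
            Set A).indicator f e) -
        ∑ e : A,
          ({e | e ∉ T ∧
              tail e ∈ {w | Relation.ReflTransGen (undirStep tail head (T \ {a₀})) (tail a₀) w} ∧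
              head e ∉ {w | Relation.ReflTransGen (undirStep tail head (T \ {a₀})) (tail a₀) w}} :
            Set A).indicator f e := by
  set C : Set V := {w | Relation.ReflTransGen (undirStep tail head (T \ {a₀})) (tail a₀) w}
  have htail : tail a₀ ∈ C := Relation.ReflTransGen.refl
  have hhead : head a₀ ∉ C := fun h => hT.2 (hasUndirCycle_of_reflTransGen_diff ha₀ h)
  have hcut := hf.sum_indicator_eq C
  rw [sum_indicator_tail_sub_head_eq f ha₀ htail hhead
    fun a ha => reflTransGen_undirStep_tail_iff_head ha] at hcut
  linarith

/-- Flow decomposition along a tree arc: if removing the tree arc `a₀` splits the spanning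
tree into the component `T₁` of its tail (and the complementary component), then
`f a₀ = Σ_{w ∈ T₁} b w + Σ_{e ∈ A₂} f e − Σ_{e ∈ A₁} f e`, where `A₁` (resp. `A₂`) is the
set of non-tree arcs from `T₁` to its complement (resp. from the complement to `T₁`). -/
theorem tree_arc_flow_formula {V A : Type*} [Fintype V] [Fintype A] [DecidableEq V]
    (tail head : A → V) (b : V → ℝ) (hb : ∑ v : V, b v = 0)
    (f : A → ℝ) (hf : conserves tail head b f)
    (T : Set A) (hT : IsSpanningTree tail head T) (a₀ : A) (ha₀ : a₀ ∈ T) :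
    f a₀ =
      (∑ w : V,
          ({w | Relation.ReflTransGen (undirStep tail head (T \ {a₀})) (tail a₀) w} :
            Set V).indicator b w) +
        (∑ e : A,
          ({e | e ∉ T ∧
              tail e ∉ {w | Relation.ReflTransGen (undirStep tail head (T \ {a₀})) (tail a₀) w} ∧
              head e ∈ {w | Relation.ReflTransGen (undirStep tail head (T \ {a₀})) (tail a₀) w}} :
            Set A).indicator f e) -
        ∑ e : A,
          ({e | e ∉ T ∧
              tail e ∈ {w | Relation.ReflTransGen (undirStep tail head (T \ {a₀})) (tail a₀) w} ∧
              head e ∉ {w | Relation.ReflTransGen (undirStep tail head (T \ {a₀})) (tail a₀) w}} :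
            Set A).indicator f e :=
  tree_arc_flow_formula_general tail head b f hf T hT a₀ ha₀
end

section
/- Consider the grid flow instance with L = 3 rows and a knapsack instance (values y_i, costs c_i, i = 1..n, thresholds Y, C with B ≥ max_i y_i): source v_{1,1} has supply Σ_{i=1}^n (B − y_i) + Y; sinks v_{2,i} have demand B − y_i and v_{3,n} has demand Y; each downward arc (v_{1,i}, v_{2,i}) has capacity B; each arc (v_{2,i}, v_{3,i}) has fixed-charge cost c_i for nonzero flow and 0 otherwise; all other usable arcs have zero cost and infinite capacity. Then the knapsack instance has a feasible subset S (Σ_{i∈S} c_i ≤ C and Σ_{i∈S} y_i ≥ Y) if and only if the flow instance admits a feasible flow of total cost at most C. -/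
/-!
A knapsack solution `S` is routed greedily: column `t ∈ S` sends down to row 3 the part of
`y t` still needed to reach `Y`, the remaining `B - y t` goes to the sink `v_{2,t}`, and row 1
carries the rest of the supply onward. Conversely, the columns whose arc `(v_{2,t}, v_{3,t})`
carries flow form a knapsack solution: they cost exactly the flow's cost, conservation along
row 3 makes these arcs carry `Y` in total, and the capacity `B` of the arc above `v_{2,t}`
leaves at most `y t` for the arc below it.
-/

/-- Feasibility for the 3-row, `n`-column grid instance built from a knapsack instance.
0-indexed columns `t ∈ {0,…,n−1}`.  The vertex `v_{1,0}` has supply `Σᵢ (B − yᵢ) + Y`;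
each `v_{2,t}` has demand `B − y t`; `v_{3,n−1}` has demand `Y`.  `h1 t`, `h3 t` are the
flows on the forward arcs `(v_{1,t},v_{1,t+1})` and `(v_{3,t},v_{3,t+1})`; `d12 t`, `d23 t`
are the flows on the downward arcs `(v_{1,t},v_{2,t})` and `(v_{2,t},v_{3,t})`.  Each
downward arc `(v_{1,t},v_{2,t})` has capacity `B`; all other usable arcs are uncapacitated;
row-2 forward arcs are unusable (omitted). -/
def KnapFlowFeasible (n : ℕ) (y : ℕ → ℕ) (Y B : ℕ) (h1 h3 d12 d23 : ℕ → ℝ) : Prop :=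
  (∀ t, 0 ≤ h1 t ∧ 0 ≤ h3 t ∧ 0 ≤ d12 t ∧ 0 ≤ d23 t) ∧
    (∀ t < n, d12 t ≤ B) ∧
    (∀ t < n, (if t = 0 then (∑ i ∈ Finset.range n, ((B : ℝ) - y i)) + Y else h1 (t - 1)) =
      (if t + 1 < n then h1 t else 0) + d12 t) ∧
    (∀ t < n, d12 t = ((B : ℝ) - y t) + d23 t) ∧
    (∀ t < n, (if t = 0 then 0 else h3 (t - 1)) + d23 t =
      (if t + 1 < n then h3 t else 0) + (if t = n - 1 then (Y : ℝ) else 0))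

/-- The fixed-charge cost of a flow: arc `(v_{2,t},v_{3,t})` costs `c t` when it carries
positive flow, and `0` otherwise; all other usable arcs are free. -/
noncomputable def KnapFlowCost (n : ℕ) (c : ℕ → ℕ) (d23 : ℕ → ℝ) : ℝ :=
  ∑ t ∈ Finset.range n, if 0 < d23 t then (c t : ℝ) else 0

open Finset

/-- Flow conservation along a path `0 → 1 → ⋯ → n-1`: `f t` is the flow on the arc `(t, t+1)`,
`a t` enters and `b t` leaves node `t` from outside the path. -/
def PathConserved (n : ℕ) (f a b : ℕ → ℝ) : Prop :=
  ∀ t < n, (if t = 0 then 0 else f (t - 1)) + a t = (if t + 1 < n then f t else 0) + b t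

theorem pathConserved_iff {n : ℕ} (hn : 0 < n) {f a b : ℕ → ℝ} :
    PathConserved n f a b ↔
      (∀ k, k + 1 < n → f k = ∑ t ∈ range (k + 1), (a t - b t)) ∧
        ∑ t ∈ range n, a t = ∑ t ∈ range n, b t := by
  constructor
  · intro h
    have hprefix : ∀ k, k + 1 < n → f k = ∑ t ∈ range (k + 1), (a t - b t) := by
      intro k
      induction k with
      | zero =>
        intro hk
        have h0 := h 0 hn
        simp only [if_pos hk, if_true] at h0
        simp only [zero_add, sum_range_one]
        linarith
      | succ k ih =>
        intro hk
        have hk1 := h (k + 1) (by omega)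
        simp only [if_pos hk, Nat.add_one_ne_zero, if_false, Nat.add_sub_cancel] at hk1
        rw [sum_range_succ, ← ih (by omega)]
        linarith
    refine ⟨hprefix, ?_⟩
    obtain ⟨m, rfl⟩ : ∃ m, n = m + 1 := ⟨n - 1, by omega⟩
    have hlast := h m (by omega)
    simp only [zero_add, lt_irrefl, if_false] at hlast
    rw [← sub_eq_zero, ← sum_sub_distrib, sum_range_succ]
    rcases m with _ | j
    · simp only [if_true, zero_add] at hlast
      simp [hlast]
    · simp only [Nat.add_one_ne_zero, if_false, Nat.add_sub_cancel] at hlast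
      rw [← hprefix j (by omega)]
      linarith
  · rintro ⟨hprefix, htotal⟩ t ht
    rw [← sub_eq_zero, ← sum_sub_distrib] at htotal
    rcases t with _ | j
    · by_cases h1 : 1 < n
      · simp [if_pos h1, hprefix 0 h1]
      · obtain rfl : n = 1 := by omega
        simp only [sum_range_one] at htotal
        simp
        linarith
    · by_cases h2 : j + 2 < n
      · simp only [Nat.add_one_ne_zero, if_false, Nat.add_sub_cancel, if_pos h2,
          hprefix j (by omega), hprefix (j + 1) h2, sum_range_succ _ (j + 1)]
        ring
      · obtain rfl : n = j + 2 := by omega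
        rw [sum_range_succ, ← hprefix j (by omega)] at htotal
        simp only [Nat.add_one_ne_zero, if_false, Nat.add_sub_cancel, lt_irrefl]
        linarith

theorem knapFlowFeasible_iff {n : ℕ} {y : ℕ → ℕ} {Y B : ℕ} {h1 h3 d12 d23 : ℕ → ℝ} :
    KnapFlowFeasible n y Y B h1 h3 d12 d23 ↔
      (∀ t, 0 ≤ h1 t ∧ 0 ≤ h3 t ∧ 0 ≤ d12 t ∧ 0 ≤ d23 t) ∧ (∀ t < n, d12 t ≤ B) ∧
        PathConserved n h1
          (fun t => if t = 0 then (∑ i ∈ range n, ((B : ℝ) - y i)) + Y else 0) d12 ∧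
        (∀ t < n, d12 t = ((B : ℝ) - y t) + d23 t) ∧
        PathConserved n h3 d23 (fun t => if t = n - 1 then (Y : ℝ) else 0) := by
  have hsource : ∀ (t : ℕ) (s r : ℝ), (if t = 0 then s else h1 (t - 1)) = r ↔
      (if t = 0 then 0 else h1 (t - 1)) + (if t = 0 then s else 0) = r := by
    intro t s r
    split_ifs <;> simp
  simp only [KnapFlowFeasible, PathConserved, hsource]

theorem KnapFlowFeasible.sum_d23 {n : ℕ} (hn : 0 < n) {y : ℕ → ℕ} {Y B : ℕ}
    {h1 h3 d12 d23 : ℕ → ℝ} (h : KnapFlowFeasible n y Y B h1 h3 d12 d23) :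
    ∑ t ∈ range n, d23 t = Y := by
  have hrow3 := ((pathConserved_iff hn).1 (knapFlowFeasible_iff.1 h).2.2.2.2).2
  rwa [sum_ite_eq', if_pos (mem_range.2 (Nat.sub_one_lt hn.ne'))] at hrow3

theorem KnapFlowFeasible.d23_le {n : ℕ} {y : ℕ → ℕ} {Y B : ℕ} {h1 h3 d12 d23 : ℕ → ℝ}
    (h : KnapFlowFeasible n y Y B h1 h3 d12 d23) {t : ℕ} (ht : t < n) : d23 t ≤ y t := by
  have hcap := h.2.1 t ht
  rw [h.2.2.2.1 t ht] at hcap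
  linarith

theorem knapFlowCost_eq_sum_filter (n : ℕ) (c : ℕ → ℕ) (d23 : ℕ → ℝ) :
    KnapFlowCost n c d23 = ∑ t ∈ (range n).filter (fun t => 0 < d23 t), (c t : ℝ) :=
  (sum_filter _ _).symm

theorem exists_le_sum_range_eq {n Y : ℕ} {w : ℕ → ℕ} (hY : Y ≤ ∑ t ∈ range n, w t) :
    ∃ d : ℕ → ℕ, d ≤ w ∧ ∑ t ∈ range n, d t = Y := by
  -- greedy: `d t` is the increment of the prefix sums of `w` truncated at `Y`
  set g : ℕ → ℕ := fun k => min Y (∑ t ∈ range k, w t)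
  have hg : Monotone g := fun a b hab =>
    min_le_min le_rfl (sum_le_sum_of_subset (range_subset_range.2 hab))
  refine ⟨fun t => g (t + 1) - g t, fun t => ?_, ?_⟩
  · simp only [g, sum_range_succ]
    omega
  · simp [sum_range_tsub hg, g, hY]

theorem exists_knapFlowFeasible {n : ℕ} (hn : 0 < n) {y : ℕ → ℕ} {Y B : ℕ}
    (hB : ∀ i < n, y i ≤ B) {d : ℕ → ℕ} (hdy : ∀ t < n, d t ≤ y t)
    (hd : ∑ t ∈ range n, d t = Y) :
    ∃ h1 h3 d12 : ℕ → ℝ, KnapFlowFeasible n y Y B h1 h3 d12 (fun t => d t) := by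
  set d12 : ℕ → ℝ := fun t => if t < n then (B : ℝ) - y t + d t else 0
  have hyB : ∀ t < n, (y t : ℝ) ≤ B := fun t ht => by exact_mod_cast hB t ht
  have hd12 : ∀ t, 0 ≤ d12 t := fun t => by
    by_cases ht : t < n
    · simp only [d12, if_pos ht]
      linarith [hyB t ht, (d t).cast_nonneg (α := ℝ)]
    · simp [d12, ht]
  have hsupply : ∑ t ∈ range n, d12 t = (∑ i ∈ range n, ((B : ℝ) - y i)) + Y := by
    rw [sum_congr rfl fun t ht => if_pos (mem_range.1 ht), sum_add_distrib, ← hd]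
    push_cast
    rfl
  refine ⟨fun k => ∑ t ∈ Ico (k + 1) n, d12 t, fun k => ∑ t ∈ range (k + 1), (d t : ℝ), d12,
    knapFlowFeasible_iff.2 ⟨fun t => ⟨sum_nonneg fun i _ => hd12 i,
      sum_nonneg fun i _ => (d i).cast_nonneg, hd12 t, (d t).cast_nonneg⟩, ?_, ?_, ?_, ?_⟩⟩
  · intro t ht
    simp only [d12, if_pos ht]
    linarith [show (d t : ℝ) ≤ y t by exact_mod_cast hdy t ht]
  · rw [pathConserved_iff hn, sum_ite_eq', if_pos (mem_range.2 hn), hsupply]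
    refine ⟨fun k hk => ?_, rfl⟩
    rw [sum_sub_distrib, sum_ite_eq', if_pos (mem_range.2 k.succ_pos), ← hsupply,
      ← sum_range_add_sum_Ico _ hk.le]
    ring
  · intro t ht
    simp only [d12, if_pos ht]
  · rw [pathConserved_iff hn, sum_ite_eq', if_pos (mem_range.2 (Nat.sub_one_lt hn.ne')), ← hd]
    refine ⟨fun k hk => sum_congr rfl fun t ht => ?_, by push_cast; rfl⟩
    rw [if_neg (by simp at ht; omega), sub_zero]

theorem KnapFlowFeasible.le_sum_support {n : ℕ} (hn : 0 < n) {y : ℕ → ℕ} {Y B : ℕ}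
    {h1 h3 d12 d23 : ℕ → ℝ} (h : KnapFlowFeasible n y Y B h1 h3 d12 d23) :
    Y ≤ ∑ t ∈ (range n).filter (fun t => 0 < d23 t), y t := by
  have : (Y : ℝ) ≤ ∑ t ∈ (range n).filter (fun t => 0 < d23 t), (y t : ℝ) := calc
    (Y : ℝ) = ∑ t ∈ range n, d23 t := (h.sum_d23 hn).symm
    _ = ∑ t ∈ (range n).filter (fun t => 0 < d23 t), d23 t :=
      (sum_filter_of_ne fun t _ hne => (h.1 t).2.2.2.lt_of_ne' hne).symm
    _ ≤ _ := sum_le_sum fun t ht => h.d23_le (mem_range.1 (mem_filter.1 ht).1)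
  exact_mod_cast this

theorem exists_knapFlowFeasible_knapFlowCost_le {n : ℕ} (hn : 0 < n) {y c : ℕ → ℕ} {Y B : ℕ}
    (hB : ∀ i < n, y i ≤ B) {S : Finset ℕ} (hS : S ⊆ range n) (hYS : Y ≤ ∑ i ∈ S, y i) :
    ∃ h1 h3 d12 d23 : ℕ → ℝ, KnapFlowFeasible n y Y B h1 h3 d12 d23 ∧
      KnapFlowCost n c d23 ≤ ∑ i ∈ S, c i := by
  obtain ⟨d, hdw, hd⟩ := exists_le_sum_range_eq (Y := Y)
    (w := fun t => if t ∈ S then y t else 0) (by rwa [sum_ite_mem, inter_eq_right.2 hS])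
  have hdS : ∀ t, 0 < d t → t ∈ S := fun t ht => by
    by_contra hnot
    simpa [hnot] using ht.trans_le (hdw t)
  obtain ⟨h1, h3, d12, hfeas⟩ := exists_knapFlowFeasible hn hB
    (fun t _ => (hdw t).trans (by dsimp only; split_ifs <;> simp)) hd
  refine ⟨h1, h3, d12, _, hfeas, ?_⟩
  rw [knapFlowCost_eq_sum_filter]
  push_cast
  exact sum_le_sum_of_subset_of_nonneg (fun t ht => hdS t (by simpa using (mem_filter.1 ht).2))
    fun _ _ _ => (c _).cast_nonneg

theorem knapsack_iff_capacitated_grid_flow_general (n : ℕ) (hn : 0 < n) (y c : ℕ → ℕ)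
    (Y C B : ℕ) (hB : ∀ i < n, y i ≤ B) :
    (∃ S : Finset ℕ, S ⊆ Finset.range n ∧ (∑ i ∈ S, c i) ≤ C ∧ Y ≤ ∑ i ∈ S, y i) ↔
      ∃ h1 h3 d12 d23 : ℕ → ℝ, KnapFlowFeasible n y Y B h1 h3 d12 d23 ∧
        KnapFlowCost n c d23 ≤ C := by
  constructor
  · rintro ⟨S, hS, hC, hYS⟩
    obtain ⟨h1, h3, d12, d23, hfeas, hcost⟩ :=
      exists_knapFlowFeasible_knapFlowCost_le (c := c) hn hB hS hYS
    exact ⟨h1, h3, d12, d23, hfeas, hcost.trans (by exact_mod_cast hC)⟩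
  · rintro ⟨h1, h3, d12, d23, hfeas, hcost⟩
    refine ⟨_, filter_subset (fun t => 0 < d23 t) _, ?_, hfeas.le_sum_support hn⟩
    rw [knapFlowCost_eq_sum_filter] at hcost
    exact_mod_cast hcost

/-- The knapsack instance has a feasible subset `S` (`Σ_{i∈S} cᵢ ≤ C` and `Σ_{i∈S} yᵢ ≥ Y`)
iff the constructed grid flow instance admits a feasible flow of total cost at most `C`. -/
theorem knapsack_iff_capacitated_grid_flow (n : ℕ) (hn : 0 < n) (y c : ℕ → ℕ)
    (Y C B : ℕ) (hB : ∀ i < n, y i ≤ B) (hY : Y ≤ ∑ i ∈ Finset.range n, y i) :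
    (∃ S : Finset ℕ, S ⊆ Finset.range n ∧ (∑ i ∈ S, c i) ≤ C ∧ Y ≤ ∑ i ∈ S, y i) ↔
      ∃ h1 h3 d12 d23 : ℕ → ℝ, KnapFlowFeasible n y Y B h1 h3 d12 d23 ∧
        KnapFlowCost n c d23 ≤ C :=
  knapsack_iff_capacitated_grid_flow_general n hn y c Y C B hB
end

section
/- Consider the grid flow instance with 3 rows and 2n columns built from a knapsack instance (y_i, c_i, Y, C): source v_{1,1} has supply Y, sink v_{3,2n} has demand Y; the forward arc (v_{2,2i−1}, v_{2,2i}) has capacity y_i and fixed-charge cost c_i for nonzero flow; all other usable arcs have zero cost and infinite capacity. Then there exists S ⊆ [n] with Σ_{i∈S} c_i ≤ C and Σ_{i∈S} y_i ≥ Y if and only if the instance admits a feasible flow of cost at most C. -/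
/-!
A feasible flow is determined by its values `g i` on the capacitated arcs. Conservation along
row 1 forces `∑ g i = Y`; conversely every `0 ≤ g ≤ y` with `∑ g i = Y` is routed by sending the
residual supply along row 1 and the collected flow along row 3. The support of such a `g` is a
knapsack solution, and a knapsack solution `S` yields such a `g` by truncating at `Y` the prefix
sums of `y` over `S`.
-/

/-- Feasibility for the 3-row, `2n`-column grid instance built from a knapsack instance
(0-indexed columns `t ∈ {0,…,2n−1}`).  Source `v_{1,0}` has supply `Y`, sink `v_{3,2n−1}`
has demand `Y`.  `h1 t`, `h3 t` are flows on row-1 and row-3 forward arcs `t → t+1`;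
for `i < n`, `dA i` is the flow on the downward arc `(v_{1,2i},v_{2,2i})`, `g i` the flow on
the capacitated row-2 forward arc `(v_{2,2i},v_{2,2i+1})` (capacity `y i`), and `dB i` the
flow on the downward arc `(v_{2,2i+1},v_{3,2i+1})`.  All other usable arcs are
uncapacitated; all unused arcs are omitted. -/
def KnapFwdFeasible (n : ℕ) (y : ℕ → ℕ) (Y : ℕ) (h1 h3 dA g dB : ℕ → ℝ) : Prop :=
  (∀ t, 0 ≤ h1 t ∧ 0 ≤ h3 t) ∧ (∀ i, 0 ≤ dA i ∧ 0 ≤ g i ∧ 0 ≤ dB i) ∧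
    (∀ i < n, g i ≤ y i) ∧
    (∀ i < n, dA i = g i ∧ g i = dB i) ∧
    (∀ t < 2 * n, (if t = 0 then (Y : ℝ) else h1 (t - 1)) =
      (if t + 1 < 2 * n then h1 t else 0) + (if t % 2 = 0 then dA (t / 2) else 0)) ∧
    (∀ t < 2 * n, (if t = 0 then 0 else h3 (t - 1)) + (if t % 2 = 1 then dB (t / 2) else 0) =
      (if t + 1 < 2 * n then h3 t else 0) + (if t = 2 * n - 1 then (Y : ℝ) else 0))

/-- Fixed-charge cost: the capacitated arc `(v_{2,2i},v_{2,2i+1})` costs `c i` when carrying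
positive flow. -/
noncomputable def KnapFwdCost (n : ℕ) (c : ℕ → ℕ) (g : ℕ → ℝ) : ℝ :=
  ∑ i ∈ Finset.range n, if 0 < g i then (c i : ℝ) else 0

theorem Nat.forall_lt_two_mul_iff {P : ℕ → Prop} {n : ℕ} :
    (∀ t < 2 * n, P t) ↔ ∀ k < n, P (2 * k) ∧ P (2 * k + 1) := by
  refine ⟨fun h k hk => ⟨h _ (by omega), h _ (by omega)⟩, fun h t ht => ?_⟩
  obtain ⟨k, rfl | rfl⟩ := Nat.even_or_odd' t
  · exact (h k (by omega)).1
  · exact (h k (by omega)).2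

theorem Nat.exists_le_sum_range_eq {a : ℕ → ℕ} {n Y : ℕ} (h : Y ≤ ∑ i ∈ Finset.range n, a i) :
    ∃ b ≤ a, ∑ i ∈ Finset.range n, b i = Y := by
  set A : ℕ → ℕ := fun k => min (∑ i ∈ Finset.range k, a i) Y
  have hA : Monotone A := fun j k hjk =>
    min_le_min_right _ (Finset.sum_le_sum_of_subset (Finset.range_subset_range.mpr hjk))
  refine ⟨fun i => A (i + 1) - A i, fun i => ?_, ?_⟩
  · simp only [A, Finset.sum_range_succ]
    omega
  · rw [Finset.sum_range_tsub hA]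
    simp [A, h]

section

variable {n : ℕ} {y c : ℕ → ℕ} {Y C : ℕ} {h1 h3 dA g dB : ℕ → ℝ}

theorem knapFwdFeasible_iff_columnPairs :
    KnapFwdFeasible n y Y h1 h3 dA g dB ↔
      (∀ t, 0 ≤ h1 t ∧ 0 ≤ h3 t) ∧ (∀ i, 0 ≤ dA i ∧ 0 ≤ g i ∧ 0 ≤ dB i) ∧
      (∀ i < n, g i ≤ y i) ∧ (∀ i < n, dA i = g i ∧ g i = dB i) ∧
      (∀ k < n, (if k = 0 then (Y : ℝ) else h1 (2 * k - 1)) = h1 (2 * k) + dA k ∧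
        h1 (2 * k) = if k + 1 < n then h1 (2 * k + 1) else 0) ∧
      (∀ k < n, (if k = 0 then 0 else h3 (2 * k - 1)) = h3 (2 * k) ∧
        h3 (2 * k) + dB k = if k + 1 < n then h3 (2 * k + 1) else (Y : ℝ)) := by
  unfold KnapFwdFeasible
  simp only [Nat.forall_lt_two_mul_iff]
  refine and_congr_right' <| and_congr_right' <| and_congr_right' <| and_congr_right' <|
    and_congr (forall₂_congr fun k hk => ?_) (forall₂_congr fun k hk => ?_)
  · have h₁ : 2 * k + 1 < 2 * n := by omega
    have h₂ : 2 * k + 1 + 1 < 2 * n ↔ k + 1 < n := by omega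
    simp [h₁, h₂]
  · have h₁ : 2 * k + 1 < 2 * n := by omega
    have h₂ : 2 * k + 1 + 1 < 2 * n ↔ k + 1 < n := by omega
    have h₃ : 2 * k ≠ 2 * n - 1 := by omega
    have h₄ : 2 * k + 1 = 2 * n - 1 ↔ ¬ k + 1 < n := by omega
    have h₅ : (2 * k + 1) / 2 = k := by omega
    simp only [h₁, h₂, h₃, h₄, h₅]
    by_cases hlast : k + 1 < n <;> simp [hlast]

theorem KnapFwdFeasible.sum_eq (hn : 0 < n) (hF : KnapFwdFeasible n y Y h1 h3 dA g dB) :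
    ∑ i ∈ Finset.range n, g i = Y := by
  obtain ⟨-, -, -, hAB, hrow1, -⟩ := knapFwdFeasible_iff_columnPairs.mp hF
  have residual : ∀ k < n, h1 (2 * k) = Y - ∑ i ∈ Finset.range (k + 1), g i := by
    intro k
    induction k with
    | zero =>
      intro h0
      have hin := (hrow1 0 h0).1
      simp only [if_true, (hAB 0 h0).1] at hin
      rw [zero_add, Finset.sum_range_one]
      linarith
    | succ k ih =>
      intro hk
      have hin := (hrow1 (k + 1) hk).1
      have hthrough := (hrow1 k (by omega)).2
      have hodd : 2 * (k + 1) - 1 = 2 * k + 1 := by omega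
      simp only [Nat.add_one_ne_zero, if_false, (hAB _ hk).1, hk, if_true, hodd] at hin hthrough
      rw [Finset.sum_range_succ]
      linarith [ih (by omega)]
  obtain ⟨m, rfl⟩ : ∃ m, n = m + 1 := ⟨n - 1, by omega⟩
  have hend := (hrow1 m (by omega)).2
  rw [if_neg (lt_irrefl _)] at hend
  linarith [residual m (by omega)]

theorem knapFwdFeasible_of_sum_eq (hg : ∀ i, 0 ≤ g i) (hcap : ∀ i < n, g i ≤ y i)
    (hsum : ∑ i ∈ Finset.range n, g i = Y) :
    KnapFwdFeasible n y Y (fun t => ∑ i ∈ Finset.Ico (t / 2 + 1) n, g i)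
      (fun t => ∑ i ∈ Finset.range ((t + 1) / 2), g i) g g g := by
  refine knapFwdFeasible_iff_columnPairs.mpr ⟨fun t => ⟨Finset.sum_nonneg fun i _ => hg i,
    Finset.sum_nonneg fun i _ => hg i⟩, fun i => ⟨hg i, hg i, hg i⟩, hcap,
    fun _ _ => ⟨rfl, rfl⟩, fun k hk => ⟨?_, ?_⟩, fun k hk => ⟨?_, ?_⟩⟩
  · have hin : (if k = 0 then (Y : ℝ) else ∑ i ∈ Finset.Ico ((2 * k - 1) / 2 + 1) n, g i) =
        ∑ i ∈ Finset.Ico k n, g i := by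
      split_ifs with h0
      · rw [h0, ← Finset.range_eq_Ico, hsum]
      · rw [show (2 * k - 1) / 2 + 1 = k by omega]
    rw [hin, Finset.sum_eq_sum_Ico_succ_bot hk, add_comm, show 2 * k / 2 + 1 = k + 1 by omega]
  · split_ifs with hlast
    · rw [show (2 * k + 1) / 2 = 2 * k / 2 by omega]
    · rw [show 2 * k / 2 + 1 = n by omega, Finset.Ico_self, Finset.sum_empty]
  · split_ifs with h0
    · simp [h0]
    · rw [show 2 * k - 1 + 1 = 2 * k by omega, show (2 * k + 1) / 2 = 2 * k / 2 by omega]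
  · rw [show (2 * k + 1) / 2 = k by omega, ← Finset.sum_range_succ]
    split_ifs with hlast
    · rw [show 2 * k + 1 + 1 = 2 * (k + 1) by omega, Nat.mul_div_cancel_left _ two_pos]
    · rw [show k + 1 = n by omega, hsum]

theorem knapFwdCost_eq_sum_filter :
    KnapFwdCost n c g = ∑ i ∈ (Finset.range n).filter (fun i => 0 < g i), (c i : ℝ) :=
  (Finset.sum_filter _ _).symm

theorem knapFwdCost_le_sum {S : Finset ℕ} (hgS : ∀ i < n, 0 < g i → i ∈ S) :
    KnapFwdCost n c g ≤ ∑ i ∈ S, (c i : ℝ) := by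
  rw [knapFwdCost_eq_sum_filter]
  refine Finset.sum_le_sum_of_subset_of_nonneg (fun i hi => ?_) fun i _ _ => Nat.cast_nonneg _
  rw [Finset.mem_filter, Finset.mem_range] at hi
  exact hgS i hi.1 hi.2

theorem exists_capped_vector_of_knapsack {S : Finset ℕ} (hS : S ⊆ Finset.range n)
    (hc : ∑ i ∈ S, c i ≤ C) (hy : Y ≤ ∑ i ∈ S, y i) :
    ∃ g : ℕ → ℝ, (∀ i, 0 ≤ g i) ∧ (∀ i < n, g i ≤ y i) ∧ ∑ i ∈ Finset.range n, g i = Y ∧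
      KnapFwdCost n c g ≤ C := by
  obtain ⟨b, hb, hbY⟩ := Nat.exists_le_sum_range_eq (a := fun i => if i ∈ S then y i else 0)
    (n := n) (Y := Y) (by rwa [← Finset.sum_filter, Finset.filter_mem_eq_inter,
      Finset.inter_eq_right.mpr hS])
  refine ⟨fun i => b i, fun i => Nat.cast_nonneg _, fun i _ => ?_, by rw [← hbY, Nat.cast_sum],
    ?_⟩
  · have hbi : b i ≤ y i := (hb i).trans (by dsimp only; split_ifs <;> simp)
    exact Nat.cast_le.mpr hbi
  · refine (knapFwdCost_le_sum fun i _ hi => ?_).trans (by exact_mod_cast hc)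
    by_contra hiS
    have hbi : b i = 0 := by simpa [hiS] using hb i
    simp [hbi] at hi

theorem knapsack_of_capped_vector {g : ℕ → ℝ} (hg : ∀ i, 0 ≤ g i) (hcap : ∀ i < n, g i ≤ y i)
    (hsum : ∑ i ∈ Finset.range n, g i = Y) (hcost : KnapFwdCost n c g ≤ C) :
    ∃ S : Finset ℕ, S ⊆ Finset.range n ∧ (∑ i ∈ S, c i) ≤ C ∧ Y ≤ ∑ i ∈ S, y i := by
  set S := (Finset.range n).filter (fun i => 0 < g i)
  refine ⟨S, Finset.filter_subset _ _, ?_, ?_⟩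
  · rw [knapFwdCost_eq_sum_filter] at hcost
    exact_mod_cast hcost
  · have hsupp : ∑ i ∈ S, g i = Y := by
      rw [Finset.sum_filter_of_ne fun i _ hi => (hg i).lt_of_ne' hi, hsum]
    have : (Y : ℝ) ≤ ∑ i ∈ S, (y i : ℝ) := hsupp ▸ Finset.sum_le_sum fun i hi =>
      hcap i (Finset.mem_range.mp (Finset.mem_filter.mp hi).1)
    exact_mod_cast this

end

theorem knapsack_iff_forward_capacitated_grid_flow_general (n : ℕ) (hn : 0 < n) (y c : ℕ → ℕ)
    (Y C : ℕ) :
    (∃ S : Finset ℕ, S ⊆ Finset.range n ∧ (∑ i ∈ S, c i) ≤ C ∧ Y ≤ ∑ i ∈ S, y i) ↔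
      ∃ h1 h3 dA g dB : ℕ → ℝ, KnapFwdFeasible n y Y h1 h3 dA g dB ∧
        KnapFwdCost n c g ≤ C := by
  constructor
  · rintro ⟨S, hS, hc, hy⟩
    obtain ⟨g, hg, hcap, hsum, hcost⟩ := exists_capped_vector_of_knapsack hS hc hy
    exact ⟨_, _, g, g, g, knapFwdFeasible_of_sum_eq hg hcap hsum, hcost⟩
  · rintro ⟨h1, h3, dA, g, dB, hF, hcost⟩
    exact knapsack_of_capped_vector (fun i => (hF.2.1 i).2.1) hF.2.2.1 (hF.sum_eq hn) hcost

/-- There exists `S ⊆ [n]` with `Σ_{i∈S} cᵢ ≤ C` and `Σ_{i∈S} yᵢ ≥ Y` iff the constructed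
grid instance (with arbitrary capacities on forward arcs) admits a feasible flow of cost at
most `C`. -/
theorem knapsack_iff_forward_capacitated_grid_flow (n : ℕ) (hn : 0 < n) (y c : ℕ → ℕ)
    (Y C : ℕ) (hY : Y ≤ ∑ i ∈ Finset.range n, y i) :
    (∃ S : Finset ℕ, S ⊆ Finset.range n ∧ (∑ i ∈ S, c i) ≤ C ∧ Y ≤ ∑ i ∈ S, y i) ↔
      ∃ h1 h3 dA g dB : ℕ → ℝ, KnapFwdFeasible n y Y h1 h3 dA g dB ∧
        KnapFwdCost n c g ≤ C :=
  knapsack_iff_forward_capacitated_grid_flow_general n hn y c Y C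
end
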